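/- arXiv:1805.02147 — 7 statements merged into one kernel-verified Lean document; each statement's English description precedes it below -/
import Mathlib

section
/- If G is a strong k-chromatic-choosable graph (with k ≥ 2), then the list chromatic number of G equals k; that is, G is chromatic-choosable. -/
open SimpleGraph Finset

section ListColoringDefs

variable {V : Type*}

/-- `f` is a proper coloring of `G` choosing each color from the list `L v`. -/
def IsProperListColoring (G : SimpleGraph V) (L : V → Finset ℕ) (f : V → ℕ) : Prop :=
  (∀ v, f v ∈ L v) ∧ ∀ u v, G.Adj u v → f u ≠ f v

/-- `G` admits a proper coloring from the list assignment `L`. -/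
def ListColorable (G : SimpleGraph V) (L : V → Finset ℕ) : Prop :=
  ∃ f, IsProperListColoring G L f

/-- `G` is colorable from every list assignment with lists of size at least `m`. -/
def Choosable (G : SimpleGraph V) (m : ℕ) : Prop :=
  ∀ L : V → Finset ℕ, (∀ v, m ≤ (L v).card) → ListColorable G L

/-- The list chromatic number of `G`. -/
noncomputable def listChromaticNumber (G : SimpleGraph V) : ℕ :=
  sInf { m | Choosable G m }

/-- `G` is strong `k`-chromatic-choosable: `χ(G) = k` and every `(k-1)`-assignment
from which `G` is not colorable is constant. -/
def StrongCC (G : SimpleGraph V) (k : ℕ) : Prop :=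
  G.chromaticNumber = (k : ℕ∞) ∧
    ∀ L : V → Finset ℕ, (∀ v, (L v).card = k - 1) → ¬ ListColorable G L →
      ∀ u v : V, L u = L v

/-- The number of proper `L`-colorings of `G`. -/
noncomputable def numColorings (G : SimpleGraph V) (L : V → Finset ℕ) : ℕ :=
  Set.ncard { f : V → ℕ | IsProperListColoring G L f }

/-- The list color function `P_ℓ(G,k)`: the minimum number of proper `L`-colorings
over all `k`-assignments `L`. -/
noncomputable def listColorFunction (G : SimpleGraph V) (k : ℕ) : ℕ :=
  sInf { n | ∃ L : V → Finset ℕ, (∀ v, (L v).card = k) ∧ n = numColorings G L }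

/-- The chromatic polynomial `P(G,k)`: the number of proper colorings with colors
from `{0, …, k-1}`. -/
noncomputable def chromPoly (G : SimpleGraph V) (k : ℕ) : ℕ :=
  numColorings G (fun _ => Finset.range k)

/-- The join `G ∨ K_p` of `G` with the complete graph on `p` vertices. -/
def joinK (G : SimpleGraph V) (p : ℕ) : SimpleGraph (V ⊕ Fin p) :=
  SimpleGraph.fromRel (fun a b =>
    match a, b with
    | Sum.inl u, Sum.inl v => G.Adj u v
    | _, _ => True)

/-- The star `K_{1,s}`: center `none` adjacent to the `s` leaves. -/
def starGraph (s : ℕ) : SimpleGraph (Option (Fin s)) :=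
  SimpleGraph.fromRel (fun a _ => a = none)

/-- The cycle graph `C_n` on `Fin n` (for `n ≥ 3`). -/
def cycGraph (n : ℕ) : SimpleGraph (Fin n) :=
  SimpleGraph.fromRel (fun a b => b.val = (a.val + 1) % n)

end ListColoringDefs

/-- a strong `k`-chromatic-choosable graph has list chromatic number `k`. -/
theorem stmt_0 {V : Type*} [Fintype V] (G : SimpleGraph V) (k : ℕ) (hk : 2 ≤ k)
    (h : StrongCC G k) : listChromaticNumber G = k := by
  classical
  have hχ := h.1
  -- two distinct vertices exist
  have hnontriv : ∃ u v : V, u ≠ v := by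
    by_contra hcon
    push_neg at hcon
    have hcol : G.Colorable 1 :=
      ⟨SimpleGraph.Coloring.mk (fun _ => 0)
        (fun {a b} hab => absurd (hcon a b) (G.ne_of_adj hab))⟩
    have hle := hcol.chromaticNumber_le
    rw [hχ] at hle
    have : (k : ℕ∞) ≤ ((1 : ℕ) : ℕ∞) := by exact_mod_cast hle
    have : k ≤ 1 := by exact_mod_cast this
    omega
  -- Choosable G k
  have hch : Choosable G k := by
    intro L hL
    by_contra hnc
    obtain ⟨u₀, v₀, huv⟩ := hnontriv
    have hsub : ∀ v, ∃ S : Finset ℕ, S ⊆ L v ∧ S.card = k - 1 := fun v =>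
      Finset.exists_subset_card_eq (le_trans (Nat.sub_le k 1) (hL v))
    choose S hS hScard using hsub
    have key : ∀ T : V → Finset ℕ, (∀ v, T v ⊆ L v) → (∀ v, (T v).card = k - 1) →
        ∀ u v, T u = T v := by
      intro T hTsub hTcard
      refine h.2 T hTcard ?_
      rintro ⟨f, hf1, hf2⟩
      exact hnc ⟨f, fun v => hTsub v (hf1 v), hf2⟩
    -- find x ∈ L u₀ \ S u₀
    have hcardlt : (S u₀).card < (L u₀).card := by
      have := hL u₀; have := hScard u₀; omega
    have hss : S u₀ ⊂ L u₀ :=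
      lt_of_le_of_ne (Finset.le_iff_subset.mpr (hS u₀))
        (fun he => by rw [he] at hcardlt; exact lt_irrefl _ hcardlt)
    obtain ⟨x, hxL, hxS⟩ := Finset.exists_of_ssubset hss
    have hSne : (S u₀).Nonempty := by
      rw [← Finset.card_pos, hScard u₀]; omega
    obtain ⟨a, ha⟩ := hSne
    set B : Finset ℕ := insert x ((S u₀).erase a) with hB
    have hxB : x ∈ B := Finset.mem_insert_self _ _
    have hBsub : B ⊆ L u₀ := by
      intro y hy
      rcases Finset.mem_insert.mp hy with rfl | hy
      · exact hxL
      · exact hS u₀ (Finset.mem_of_mem_erase hy)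
    have hBcard : B.card = k - 1 := by
      rw [hB, Finset.card_insert_of_notMem (fun hc => hxS (Finset.mem_of_mem_erase hc)),
        Finset.card_erase_of_mem ha, hScard u₀]
      omega
    have h2 : S u₀ = S v₀ := key S hS hScard u₀ v₀
    have h1 : B = S v₀ := by
      have := key (Function.update S u₀ B)
        (fun v => by
          rcases eq_or_ne v u₀ with rfl | hv
          · simpa using hBsub
          · simpa [Function.update_of_ne hv] using hS v)
        (fun v => by
          rcases eq_or_ne v u₀ with rfl | hv
          · simpa using hBcard
          · simpa [Function.update_of_ne hv] using hScard v) u₀ v₀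
      simpa [Function.update_of_ne (Ne.symm huv)] using this
    rw [h1, ← h2] at hxB
    exact hxS hxB
  -- ¬ Choosable G (k-1)
  have hnot : ∀ m, m < k → ¬ Choosable G m := by
    intro m hm hc
    have hLcol : ListColorable G (fun _ => Finset.range (k - 1)) := by
      apply hc
      intro v
      simp [Finset.card_range]
      omega
    obtain ⟨f, hf1, hf2⟩ := hLcol
    have hcol : G.Colorable (k - 1) := by
      refine ⟨SimpleGraph.Coloring.mk (fun v => ⟨f v, Finset.mem_range.mp (hf1 v)⟩) ?_⟩
      intro a b hab hc
      exact hf2 a b hab (congrArg Fin.val hc)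
    have hle := hcol.chromaticNumber_le
    rw [hχ] at hle
    have : k ≤ k - 1 := by exact_mod_cast hle
    omega
  -- conclude
  have hkmem : k ∈ { m | Choosable G m } := hch
  refine le_antisymm (Nat.sInf_le hkmem) ?_
  refine le_csInf ⟨k, hkmem⟩ ?_
  intro m hm
  by_contra hlt
  push_neg at hlt
  exact hnot m hlt hm
end

section
/- If G is a strong k-chromatic-choosable graph (k ≥ 2) and L is a list assignment for G with |L(v)| ≥ k-1 for every vertex v such that L is not a constant (k-1)-assignment, then G is L-colorable. -/
open SimpleGraph Finset

lemma listColorable_mono {V : Type*} {G : SimpleGraph V} {L L' : V → Finset ℕ}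
    (hsub : ∀ v, L' v ⊆ L v) (hc : ListColorable G L') : ListColorable G L := by
  obtain ⟨f, hf1, hf2⟩ := hc
  exact ⟨f, fun v => hsub v (hf1 v), hf2⟩

/-- a strong `k`-chromatic-choosable graph is colorable from any list
assignment with lists of size at least `k-1` that is not a constant `(k-1)`-assignment. -/
theorem stmt_1 {V : Type*} [Fintype V] (G : SimpleGraph V) (k : ℕ) (hk : 2 ≤ k)
    (h : StrongCC G k) (L : V → Finset ℕ) (hL : ∀ v, k - 1 ≤ (L v).card)
    (hnc : ¬ ((∀ v, (L v).card = k - 1) ∧ ∀ u v : V, L u = L v)) :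
    ListColorable G L := by
  classical
  by_contra hnc2
  by_cases hall : ∀ v, (L v).card = k - 1
  · exact hnc ⟨hall, h.2 L hall hnc2⟩
  · push_neg at hall
    obtain ⟨v0, hv0⟩ := hall
    have hv0k : k ≤ (L v0).card := by
      rcases lt_or_ge (L v0).card k with hlt | hle
      · exact absurd (le_antisymm (by omega) (hL v0)) hv0
      · exact hle
    -- shrink all lists to size k-1
    have hsub : ∀ u, ∃ t ⊆ L u, t.card = k - 1 :=
      fun u => Finset.exists_subset_card_eq (hL u)
    choose L' hL'sub hL'card using hsub
    have hnotL' : ¬ ListColorable G L' := fun hc => hnc2 (listColorable_mono hL'sub hc)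
    have hconst := h.2 L' hL'card hnotL'
    set A := L' v0 with hA
    -- pick c ∈ L v0 \ A and a ∈ A
    have hcard_sdiff : 0 < (L v0 \ A).card := by
      rw [Finset.card_sdiff_of_subset (hL'sub v0)]
      have := hL'card v0
      omega
    obtain ⟨c, hc⟩ := Finset.card_pos.mp hcard_sdiff
    rw [Finset.mem_sdiff] at hc
    have hAne : A.Nonempty := by
      rw [← Finset.card_pos, hL'card v0]; omega
    obtain ⟨a, ha⟩ := hAne
    -- new assignment
    set L'' : V → Finset ℕ := fun u => if u = v0 then insert c (A.erase a) else A with hL''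
    have hcardL'' : ∀ u, (L'' u).card = k - 1 := by
      intro u
      by_cases hu : u = v0
      · simp only [hL'', hu, if_pos rfl]
        rw [Finset.card_insert_of_notMem (fun hmem => hc.2 (Finset.mem_of_mem_erase hmem)),
          Finset.card_erase_of_mem ha, hL'card v0]
        have := hL'card v0; omega
      · simp only [hL'', if_neg hu]
        exact hL'card v0
    have hL''sub : ∀ u, L'' u ⊆ L u := by
      intro u
      by_cases hu : u = v0
      · simp only [hL'', if_pos hu, hu]
        exact Finset.insert_subset hc.1
          ((Finset.erase_subset _ _).trans (hL'sub v0))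
      · simp only [hL'', if_neg hu]
        rw [hA, hconst v0 u]
        exact hL'sub u
    have hnotL'' : ¬ ListColorable G L'' := fun hcol => hnc2 (listColorable_mono hL''sub hcol)
    have hconst'' := h.2 L'' hcardL'' hnotL''
    -- need a vertex different from v0
    have hcardV : 1 < Fintype.card V := by
      have hcol : G.Colorable (Fintype.card V) := G.colorable_of_fintype
      have hle : G.chromaticNumber ≤ (Fintype.card V : ℕ∞) := hcol.chromaticNumber_le
      rw [h.1] at hle
      have : k ≤ Fintype.card V := by exact_mod_cast hle
      omega
    obtain ⟨u, hu⟩ := Fintype.exists_ne_of_one_lt_card hcardV v0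
    have heq := hconst'' u v0
    simp only [hL'', if_neg hu, if_pos rfl] at heq
    exact hc.2 (heq ▸ Finset.mem_insert_self c (A.erase a))
end

section
/- If G is a strong k-chromatic-choosable graph (k ≥ 2), then for any natural number p, the join G ∨ K_p is strong (k+p)-chromatic-choosable. -/
open SimpleGraph Finset

/-!
Adding one universal vertex `w` at a time suffices, since `joinK (joinK G p) 1 ≅ joinK G (p + 1)`.
A colouring of `joinK G 1` from `k`-lists `L` is the same as a colour `c ∈ L w` together with a
colouring of `G` from the lists `L v \ {c}`, which have size at least `k - 1`. If `G` is strong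
`k`-chromatic-choosable, a non-colourable assignment of lists of size at least `k - 1` must consist
of lists of size exactly `k - 1`; so if `joinK G 1` is not `L`-colourable, every `c ∈ L w` lies in
every `L v`, i.e. `L w ⊆ L v`, and equality of sizes forces all lists to be `L w`.
-/

section JoinStrongCC

variable {V W : Type*}

lemma ListColorable.mono {G : SimpleGraph V} {L L' : V → Finset ℕ} (hLL' : ∀ v, L v ⊆ L' v)
    (hL : ListColorable G L) : ListColorable G L' :=
  let ⟨f, hfL, hf⟩ := hL
  ⟨f, fun v => hLL' v (hfL v), hf⟩

lemma ListColorable.comap {G : SimpleGraph V} {H : SimpleGraph W} (φ : H →g G)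
    {L : V → Finset ℕ} (hL : ListColorable G L) : ListColorable H (L ∘ φ) :=
  let ⟨f, hfL, hf⟩ := hL
  ⟨f ∘ φ, fun w => hfL (φ w), fun _ _ h => hf _ _ (φ.map_adj h)⟩

namespace StrongCC

variable {G : SimpleGraph V} {k : ℕ}

lemma of_iso {H : SimpleGraph W} (h : StrongCC G k) (e : G ≃g H) : StrongCC H k := by
  refine ⟨(chromaticNumber_congr e).symm.trans h.1, fun L hL hnc u v => ?_⟩
  have hnc' : ¬ ListColorable G (L ∘ e) := fun hc => hnc <| by
    simpa [Function.comp_def] using hc.comap e.symm.toHom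
  simpa using h.2 (L ∘ e) (fun x => hL (e x)) hnc' (e.symm u) (e.symm v)

lemma nontrivial (h : StrongCC G k) (hk : 2 ≤ k) : Nontrivial V := by
  have hG : G ≠ ⊥ := two_le_chromaticNumber_iff_ne_bot.mp (h.1 ▸ by exact_mod_cast hk)
  obtain ⟨u, v, huv⟩ := ne_bot_iff_exists_adj.mp hG
  exact ⟨u, v, huv.ne⟩

/-- If some list were larger, shrink all lists to size `k - 1`, choosing at that vertex a sublist
that is not the common list of the others: the shrunk assignment is still not colourable but not
constant. -/
lemma card_eq_of_not_listColorable (h : StrongCC G k) (hk : 2 ≤ k) {L : V → Finset ℕ}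
    (hL : ∀ v, k - 1 ≤ #(L v)) (hnc : ¬ ListColorable G L) (v : V) : #(L v) = k - 1 := by
  classical
  have := h.nontrivial hk
  by_contra hv
  choose S hSL hS using fun u => exists_subset_card_eq (hL u)
  obtain ⟨u, hu⟩ := exists_ne v
  obtain ⟨a, haL, haS⟩ : ∃ a ∈ L v, a ∉ S u :=
    exists_mem_notMem_of_card_lt_card (by rw [hS]; exact lt_of_le_of_ne (hL v) (Ne.symm hv))
  obtain ⟨T, haT, hTL, hT⟩ :=
    exists_subsuperset_card_eq (singleton_subset_iff.2 haL) (by simp; omega) (hL v)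
  have hsub : ∀ w, Function.update S v T w ⊆ L w := by
    intro w
    rcases eq_or_ne w v with rfl | hw
    · simpa using hTL
    · simpa [hw] using hSL w
  have hcard : ∀ w, #(Function.update S v T w) = k - 1 := by
    intro w
    rcases eq_or_ne w v with rfl | hw
    · simpa using hT
    · simpa [hw] using hS w
  have hTS : T = S u := by
    simpa [hu] using h.2 _ hcard (fun hc => hnc (hc.mono hsub)) v u
  exact haS (hTS ▸ haT (mem_singleton_self a))

end StrongCC

section Join

variable {G : SimpleGraph V} {p : ℕ}

@[simp]
lemma joinK_adj_inl_inl {u v : V} : (joinK G p).Adj (Sum.inl u) (Sum.inl v) ↔ G.Adj u v := by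
  simp only [joinK, fromRel_adj, ne_eq, Sum.inl.injEq]
  exact ⟨fun ⟨_, h⟩ => h.elim id G.adj_symm, fun h => ⟨h.ne, Or.inl h⟩⟩

@[simp]
lemma joinK_adj_inl_inr {u : V} {i : Fin p} : (joinK G p).Adj (Sum.inl u) (Sum.inr i) := by
  simp [joinK]

@[simp]
lemma joinK_adj_inr_inl {u : V} {i : Fin p} : (joinK G p).Adj (Sum.inr i) (Sum.inl u) :=
  joinK_adj_inl_inr.symm

@[simp]
lemma joinK_adj_inr_inr {i j : Fin p} : (joinK G p).Adj (Sum.inr i) (Sum.inr j) ↔ i ≠ j := by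
  simp [joinK]

def joinKZeroIso (G : SimpleGraph V) : G ≃g joinK G 0 where
  toEquiv := (Equiv.sumEmpty V (Fin 0)).symm
  map_rel_iff' := joinK_adj_inl_inl

def joinKSuccIso (G : SimpleGraph V) (p : ℕ) : joinK (joinK G p) 1 ≃g joinK G (p + 1) where
  toEquiv := (Equiv.sumAssoc V (Fin p) (Fin 1)).trans ((Equiv.refl V).sumCongr finSumFinEquiv)
  map_rel_iff' := by
    rintro ((u | i) | i) ((v | j) | j) <;> simp [Fin.ext_iff] <;> omega

lemma colorable_joinK_one_iff {n : ℕ} : (joinK G 1).Colorable (n + 1) ↔ G.Colorable n := by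
  constructor
  · rintro ⟨C⟩
    let C' : G.Coloring {c // c ≠ C (Sum.inr 0)} :=
      Coloring.mk (fun v => ⟨C (Sum.inl v), C.valid joinK_adj_inl_inr⟩)
        fun huv heq => C.valid (joinK_adj_inl_inl.2 huv) (congrArg Subtype.val heq)
    simpa using C'.colorable
  · rintro ⟨C⟩
    let C' : (joinK G 1).Coloring (Option (Fin n)) :=
      Coloring.mk (Sum.elim (some ∘ C) fun _ => none) <| by
        rintro (u | i) (v | j) huv
        · simpa using C.valid (joinK_adj_inl_inl.1 huv)
        · simp
        · simp
        · exact absurd (Subsingleton.elim i j) (joinK_adj_inr_inr.1 huv)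
    simpa using C'.colorable

lemma chromaticNumber_joinK_one {n : ℕ} (hG : G.chromaticNumber = n + 1) :
    (joinK G 1).chromaticNumber = n + 1 + 1 := by
  rw [← Nat.cast_add_one, chromaticNumber_eq_iff_colorable_not_colorable,
    colorable_joinK_one_iff, colorable_joinK_one_iff]
  exact chromaticNumber_eq_iff_colorable_not_colorable.mp hG

lemma listColorable_joinK_one_of_erase {L : V ⊕ Fin 1 → Finset ℕ} {c : ℕ}
    (hc : c ∈ L (Sum.inr 0)) (hG : ListColorable G fun v => (L (Sum.inl v)).erase c) :
    ListColorable (joinK G 1) L := by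
  obtain ⟨f, hfL, hf⟩ := hG
  refine ⟨Sum.elim f fun _ => c, ?_, ?_⟩
  · rintro (v | i)
    · exact erase_subset _ _ (hfL v)
    · rwa [Subsingleton.elim i 0]
  · rintro (u | i) (v | j) huv
    · exact hf u v (joinK_adj_inl_inl.1 huv)
    · exact ne_of_mem_erase (hfL u)
    · exact (ne_of_mem_erase (hfL v)).symm
    · exact absurd (Subsingleton.elim i j) (joinK_adj_inr_inr.1 huv)

lemma StrongCC.joinK_one {k : ℕ} (h : StrongCC G k) (hk : 2 ≤ k) :
    StrongCC (joinK G 1) (k + 1) := by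
  obtain ⟨n, rfl⟩ : ∃ n, k = n + 1 := ⟨k - 1, by omega⟩
  refine ⟨by exact_mod_cast chromaticNumber_joinK_one (by exact_mod_cast h.1), fun L hL hnc => ?_⟩
  have hsub : ∀ v, L (Sum.inr 0) ⊆ L (Sum.inl v) := by
    intro v c hc
    have hcard := h.card_eq_of_not_listColorable hk
      (L := fun v => (L (Sum.inl v)).erase c)
      (fun v => by simpa [hL] using pred_card_le_card_erase (s := L (Sum.inl v)) (a := c))
      (fun hG => hnc (listColorable_joinK_one_of_erase hc hG)) v
    by_contra hcv
    simp only [erase_eq_of_notMem hcv, hL] at hcard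
    omega
  have hw : ∀ x, L x = L (Sum.inr 0) := by
    rintro (v | i)
    · exact (eq_of_subset_of_card_le (hsub v) (by rw [hL, hL])).symm
    · rw [Subsingleton.elim i 0]
  exact fun x y => (hw x).trans (hw y).symm

end Join

end JoinStrongCC

theorem stmt_2_general {V : Type*} (G : SimpleGraph V) (k : ℕ) (hk : 2 ≤ k)
    (h : StrongCC G k) (p : ℕ) : StrongCC (joinK G p) (k + p) := by
  induction p with
  | zero => exact h.of_iso (joinKZeroIso G)
  | succ p ih =>
    rw [← Nat.add_assoc]
    exact (ih.joinK_one (by omega)).of_iso (joinKSuccIso G p)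

/-- the join of a strong `k`-chromatic-choosable graph with `K_p`
is strong `(k+p)`-chromatic-choosable. -/
theorem stmt_2 {V : Type*} [Fintype V] (G : SimpleGraph V) (k : ℕ) (hk : 2 ≤ k)
    (h : StrongCC G k) (p : ℕ) : StrongCC (joinK G p) (k + p) :=
  stmt_2_general G k hk h p
end

section
/- If G is a strong k-chromatic-choosable graph (k ≥ 2), then for every vertex v of G, the list chromatic number of G − {v} is strictly less than k. -/
open SimpleGraph Finset

/-- deleting any vertex from a strong `k`-chromatic-choosable graph
yields a graph with list chromatic number less than `k`. -/
theorem stmt_3 {V : Type*} [Fintype V] [DecidableEq V] (G : SimpleGraph V) (k : ℕ)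
    (hk : 2 ≤ k) (h : StrongCC G k) (v : V) :
    listChromaticNumber (G.induce ({v}ᶜ : Set V)) < k := by
  have hch : Choosable (G.induce ({v}ᶜ : Set V)) (k - 1) := by
    intro L' hL'
    -- shrink lists to size exactly k-1
    have hsub : ∀ w : ({v}ᶜ : Set V), ∃ s : Finset ℕ, s ⊆ L' w ∧ s.card = k - 1 := by
      intro w
      exact Finset.exists_subset_card_eq (hL' w)
    choose L'' hL''sub hL''card using hsub
    suffices hc : ListColorable (G.induce ({v}ᶜ : Set V)) L'' by
      obtain ⟨f, hf1, hf2⟩ := hc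
      exact ⟨f, fun w => hL''sub w (hf1 w), hf2⟩
    by_cases hne : Nonempty ({v}ᶜ : Set V)
    case neg =>
      exact ⟨fun _ => 0, fun w => absurd ⟨w⟩ hne, fun a b _ => absurd ⟨a⟩ hne⟩
    obtain ⟨u⟩ := hne
    by_contra hnc
    set Lv : Finset ℕ :=
      if L'' u = Finset.range (k - 1) then (Finset.range (k - 1)).image (· + 1)
      else Finset.range (k - 1) with hLv
    have hLvcard : Lv.card = k - 1 := by
      rw [hLv]
      split
      · rw [Finset.card_image_of_injective _ (add_left_injective 1), Finset.card_range]
      · rw [Finset.card_range]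
    have hLvne : Lv ≠ L'' u := by
      rw [hLv]
      split
      case isTrue ht =>
        rw [ht]
        intro hcontra
        have h0 : (0 : ℕ) ∈ Finset.range (k - 1) :=
          Finset.mem_range.mpr (by omega)
        rw [← hcontra] at h0
        obtain ⟨x, _, hx⟩ := Finset.mem_image.mp h0
        omega
      case isFalse hf => exact fun hc => hf hc.symm
    have huv : (u : V) ≠ v := u.2
    set L : V → Finset ℕ := fun w =>
      if hw : w = v then Lv else L'' ⟨w, hw⟩ with hLdef
    have hLcard : ∀ w, (L w).card = k - 1 := by
      intro w
      rw [hLdef]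
      dsimp only
      split
      · exact hLvcard
      · exact hL''card _
    have hGnc : ¬ ListColorable G L := by
      rintro ⟨f, hf1, hf2⟩
      apply hnc
      refine ⟨fun w => f w, ?_, ?_⟩
      · intro w
        have := hf1 (w : V)
        rw [hLdef] at this
        dsimp only at this
        rw [dif_neg (show (w : V) ≠ v from w.2)] at this
        convert this
      · intro a b hab
        exact hf2 _ _ hab
    have hconst := h.2 L hLcard hGnc (u : V) v
    rw [hLdef] at hconst
    dsimp only at hconst
    rw [dif_neg huv, dif_pos rfl] at hconst
    exact hLvne (by simpa using hconst.symm)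
  have h1 : listChromaticNumber (G.induce ({v}ᶜ : Set V)) ≤ k - 1 :=
    Nat.sInf_le hch
  omega
end

section
/- A graph G is strong 3-chromatic-choosable if and only if G is an odd cycle. -/
open SimpleGraph Finset

/-!
If two consecutive lists of a 2-assignment of a cycle differ, say `c ∈ L (k + 1) \ L k`, color
greedily around the cycle starting with `c` at `k + 1`; the last vertex `k` cannot clash with `c`.
So an odd cycle (which has chromatic number 3) is strong 3-chromatic-choosable, and so is every
graph isomorphic to it.

Conversely, a strong 3-chromatic-choosable graph is not bipartite, so it has a shortest odd closed
walk `w`. Giving the vertices of `w` the list `{0, 1}` and all others `{2, 3}` yields a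
non-colorable, hence constant, 2-assignment: `w` visits every vertex. A repeated vertex or a chord
of `w` would split it into a shorter odd closed walk, so `w` is an induced cycle spanning the graph.
-/

open SimpleGraph Walk

section

variable {V W : Type*} {G : SimpleGraph V}

theorem cycGraph_eq_cycleGraph (n : ℕ) : cycGraph n = cycleGraph n := by
  ext a b
  match n with
  | 0 => exact a.elim0
  | 1 => simp [cycGraph, Subsingleton.elim a b]
  | m + 2 =>
    have hsucc : ∀ x y : Fin (m + 2), y - x = 1 ↔ y.val = (x.val + 1) % (m + 2) := by
      intro x y
      rw [sub_eq_iff_eq_add', Fin.ext_iff, Fin.val_add, Fin.val_one]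
    have hne : ∀ x y : Fin (m + 2), y - x = 1 → x ≠ y := by
      rintro x y h rfl
      simp at h
    rw [cycGraph, fromRel_adj, cycleGraph_adj, hsucc, hsucc]
    constructor
    · rintro ⟨-, h⟩
      exact h.symm
    · rintro (h | h)
      · exact ⟨(hne b a ((hsucc b a).2 h)).symm, Or.inr h⟩
      · exact ⟨hne a b ((hsucc a b).2 h), Or.inl h⟩

theorem cycleGraph_adj_of_lt {n : ℕ} {a b : Fin n} (h : a < b) :
    (cycleGraph n).Adj a b ↔ b.val - a.val = 1 ∨ b.val - a.val = n - 1 := by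
  rw [cycleGraph_adj', Fin.coe_sub_iff_lt.2 h, Fin.sub_val_of_le h.le]
  have := b.isLt
  have : a.val < b.val := h
  omega

theorem ListColorable.of_hom {H : SimpleGraph W} {L : W → Finset ℕ} (φ : G →g H)
    (h : ListColorable H L) : ListColorable G (L ∘ φ) := by
  obtain ⟨f, hmem, hadj⟩ := h
  exact ⟨f ∘ φ, fun v => hmem (φ v), fun u v huv => hadj _ _ (φ.map_rel huv)⟩

theorem StrongCC.of_iso_s5 {H : SimpleGraph W} {k : ℕ} (φ : G ≃g H) (h : StrongCC H k) :
    StrongCC G k := by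
  refine ⟨(chromaticNumber_congr φ).trans h.1, fun L hcard hL u v => ?_⟩
  have hL' : ¬ ListColorable H (L ∘ φ.symm) := fun hc => hL <| by
    simpa [Function.comp_def] using hc.of_hom φ.toHom
  simpa using h.2 (L ∘ φ.symm) (fun _ => hcard _) hL' (φ u) (φ v)

theorem StrongCC.not_colorable {k : ℕ} (h : StrongCC G (k + 1)) : ¬ G.Colorable k := fun hc => by
  have := h.1 ▸ hc.chromaticNumber_le
  norm_cast at this
  omega

open Fin.CommRing in
theorem Fin.exists_apply_add_one_ne {α : Type*} {n : ℕ} [NeZero n] {f : Fin n → α}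
    (h : ∃ a b, f a ≠ f b) : ∃ k, f (k + 1) ≠ f k := by
  by_contra! hconst
  have hcast : ∀ j : ℕ, f j = f 0 := by
    intro j
    induction j with
    | zero => simp
    | succ j ih => rw [Nat.cast_succ, hconst, ih]
  obtain ⟨a, b, hab⟩ := h
  exact hab (by rw [← Fin.cast_val_eq_self a, ← Fin.cast_val_eq_self b, hcast, hcast])

theorem exists_seq_mem_of_two_le_card (ℓ : ℕ → Finset ℕ) (hℓ : ∀ j, 2 ≤ (ℓ j).card)
    {c : ℕ} (hc : c ∈ ℓ 0) : ∃ g : ℕ → ℕ, g 0 = c ∧ ∀ j, g j ∈ ℓ j ∧ g (j + 1) ≠ g j := by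
  have hne : ∀ j x, (ℓ j \ {x}).Nonempty := fun j x => by
    rw [Finset.sdiff_nonempty]
    intro hsub
    have := (Finset.card_le_card hsub).trans_lt' (hℓ j)
    simp at this
  let g : ℕ → ℕ := fun j => Nat.rec c (fun j x => (ℓ (j + 1) \ {x}).min' (hne _ x)) j
  have hsucc : ∀ j, g (j + 1) ∈ ℓ (j + 1) \ {g j} := fun j => Finset.min'_mem _ _
  refine ⟨g, rfl, fun j => ⟨?_, by simpa using (Finset.mem_sdiff.1 (hsucc j)).2⟩⟩
  cases j with
  | zero => exact hc
  | succ j => exact (Finset.mem_sdiff.1 (hsucc j)).1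

open Fin.CommRing in
theorem cycleGraph_listColorable {n : ℕ} (L : Fin n → Finset ℕ) (hcard : ∀ i, (L i).card = 2)
    (hL : ∃ a b, L a ≠ L b) : ListColorable (cycleGraph n) L := by
  obtain ⟨m, rfl⟩ : ∃ m, n = m + 2 := by
    obtain ⟨a, b, hab⟩ := hL
    have : a ≠ b := fun h => hab (h ▸ rfl)
    exact ⟨n - 2, by have := a.isLt; have := b.isLt; omega⟩
  obtain ⟨k, hk⟩ := Fin.exists_apply_add_one_ne hL
  obtain ⟨c, hck1, hck⟩ : ∃ c ∈ L (k + 1), c ∉ L k := Finset.not_subset.1 fun hsub =>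
    hk (Finset.eq_of_subset_of_card_le hsub (by rw [hcard, hcard]))
  obtain ⟨g, hg0, hg⟩ := exists_seq_mem_of_two_le_card (fun j => L (k + 1 + j))
    (fun j => (hcard _).ge) (by simpa using hck1)
  have hmem : ∀ i, g (i - (k + 1)).val ∈ L i := fun i => by
    simpa [Fin.cast_val_eq_self] using (hg (i - (k + 1)).val).1
  refine ⟨fun i => g (i - (k + 1)).val, hmem, ?_⟩
  have hstep : ∀ i, g (i + 1 - (k + 1)).val ≠ g (i - (k + 1)).val := by
    intro i
    by_cases hi : i - (k + 1) = Fin.last (m + 1)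
    · have hik : i = k := sub_eq_zero.1 <| by
        rw [show i - k = i - (k + 1) + 1 by ring, hi, Fin.last_add_one]
      subst i
      have : k + 1 - (k + 1) = 0 := sub_self _
      rw [this, Fin.val_zero, hg0]
      exact fun h => hck (h ▸ hmem k)
    · rw [add_sub_right_comm, Fin.val_add_one, if_neg hi]
      exact (hg _).2
  intro u v huv
  rcases cycleGraph_adj.1 huv with h | h
  · rw [sub_eq_iff_eq_add'] at h
    subst h
    exact hstep v
  · rw [sub_eq_iff_eq_add'] at h
    subst h
    exact (hstep u).symm

theorem strongCC_cycleGraph {n : ℕ} (hodd : Odd n) (hn : 3 ≤ n) : StrongCC (cycleGraph n) 3 :=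
  ⟨chromaticNumber_cycleGraph_of_odd n (by omega) hodd, fun L hcard hL u v => by
    by_contra huv
    exact hL (cycleGraph_listColorable L hcard ⟨u, v, huv⟩)⟩

theorem SimpleGraph.Walk.even_length_iff_eq_of_lt_two {f : V → ℕ}
    (hf : ∀ u v, G.Adj u v → f u ≠ f v) {u v : V} (p : G.Walk u v)
    (hp : ∀ x ∈ p.support, f x < 2) : Even p.length ↔ f u = f v := by
  induction p with
  | nil => simp
  | @cons u w v huw q ih =>
    have hu := hp u (by simp)
    have hw := hp w (by simp)
    have hv := hp v (by simp)
    have := hf u w huw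
    rw [length_cons, Nat.even_add_one, ih fun x hx => hp x (by simp [hx])]
    omega

theorem SimpleGraph.Walk.not_listColorable_of_odd_length {L : V → Finset ℕ} {v : V}
    (w : G.Walk v v) (hw : Odd w.length) (hL : ∀ x ∈ w.support, L x ⊆ {0, 1}) :
    ¬ ListColorable G L := by
  rintro ⟨f, hmem, hadj⟩
  have hf : ∀ x ∈ w.support, f x < 2 := fun x hx => by
    have := hL x hx (hmem x)
    simp only [Finset.mem_insert, Finset.mem_singleton] at this
    omega
  exact Nat.not_even_iff_odd.2 hw ((w.even_length_iff_eq_of_lt_two hadj hf).2 rfl)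

theorem StrongCC.mem_support_of_odd_length (h : StrongCC G 3) {v : V} (w : G.Walk v v)
    (hw : Odd w.length) (x : V) : x ∈ w.support := by
  classical
  by_contra hx
  let L : V → Finset ℕ := fun u => if u ∈ w.support then {0, 1} else {2, 3}
  have hcard : ∀ u, (L u).card = 3 - 1 := fun u => by
    simp only [L]
    split_ifs <;> rfl
  have hL : ¬ ListColorable G L :=
    w.not_listColorable_of_odd_length hw fun u hu => by simp [L, hu]
  have := h.2 L hcard hL v x
  simp only [L, w.start_mem_support, hx, if_true, if_false] at this
  exact absurd this (by decide)

def SimpleGraph.Walk.IsShortestOddLoop {v : V} (w : G.Walk v v) : Prop :=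
  Odd w.length ∧ ∀ u (c : G.Walk u u), Odd c.length → w.length ≤ c.length

theorem exists_isShortestOddLoop (h : ¬ G.Colorable 2) :
    ∃ v, ∃ w : G.Walk v v, w.IsShortestOddLoop := by
  classical
  obtain ⟨v₀, w₀, hw₀⟩ : ∃ v, ∃ w : G.Walk v v, Odd w.length := by
    simpa [two_colorable_iff_forall_loop_even] using h
  have hex : ∃ m, ∃ v, ∃ w : G.Walk v v, Odd w.length ∧ w.length = m := ⟨_, v₀, w₀, hw₀, rfl⟩
  obtain ⟨v, w, hw, hlen⟩ := Nat.find_spec hex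
  exact ⟨v, w, hw, fun u c hc => hlen ▸ Nat.find_min' hex ⟨u, c, hc, rfl⟩⟩

namespace SimpleGraph.Walk.IsShortestOddLoop

variable {v : V} {w : G.Walk v v}

theorem three_le_length (hw : w.IsShortestOddLoop) : 3 ≤ w.length := by
  obtain ⟨k, hk⟩ := hw.1
  rcases k with _ | k
  · exact (G.loopless.irrefl v (adj_of_length_eq_one hk)).elim
  · omega

/-- A shortcut `q` between the `i`-th and `j`-th vertices of `w` splits `w` into two closed walks
of total length `w.length + 2 * q.length`, one of which is odd and hence not shorter than `w`. -/
theorem length_le_or_le_length_shortcut (hw : w.IsShortestOddLoop) {i j : ℕ} (hij : i ≤ j)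
    (hj : j ≤ w.length) (q : G.Walk (w.getVert j) (w.getVert i)) :
    w.length ≤ j - i + q.length ∨ j - i ≤ q.length := by
  have hend : (w.drop i).getVert (j - i) = w.getVert j := by
    rw [drop_getVert, Nat.add_sub_cancel' hij]
  let inner : G.Walk (w.getVert i) (w.getVert i) :=
    (((w.drop i).take (j - i)).copy rfl hend).append q
  let outer : G.Walk v v := (w.take i).append (q.reverse.append (w.drop j))
  have hinner : inner.length = j - i + q.length := by
    simp only [inner, length_append, length_copy, take_length, drop_length]
    omega
  have houter : outer.length = i + (q.length + (w.length - j)) := by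
    simp only [outer, length_append, length_reverse, take_length, drop_length]
    omega
  rcases Nat.even_or_odd (j - i + q.length) with heven | hodd
  · have hodd' : Odd outer.length := by
      have := hw.1
      rw [houter, Nat.odd_iff] at *
      rw [Nat.even_iff] at heven
      omega
    have := hw.2 _ outer hodd'
    omega
  · exact .inl (hinner ▸ hw.2 _ inner (hinner ▸ hodd))

theorem getVert_ne (hw : w.IsShortestOddLoop) {i j : ℕ} (hij : i < j) (hj : j < w.length) :
    w.getVert i ≠ w.getVert j := fun heq => by
  have := hw.length_le_or_le_length_shortcut hij.le hj.le (Walk.nil.copy rfl heq.symm)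
  simp only [length_copy, length_nil] at this
  omega

theorem adj_getVert_iff (hw : w.IsShortestOddLoop) {i j : ℕ} (hij : i < j) (hj : j < w.length) :
    G.Adj (w.getVert i) (w.getVert j) ↔ j - i = 1 ∨ j - i = w.length - 1 := by
  constructor
  · intro hadj
    have := hw.length_le_or_le_length_shortcut hij.le hj.le hadj.symm.toWalk
    simp only [length_cons, length_nil] at this
    omega
  · rintro (h | h)
    · simpa [show j = i + 1 by omega] using w.adj_getVert_succ (i := i) (by omega)
    · have hlast := w.adj_getVert_succ (i := w.length - 1) (by omega)
      rw [Nat.sub_add_cancel (by omega), getVert_length] at hlast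
      rw [show i = 0 by omega, show j = w.length - 1 by omega, getVert_zero]
      exact hlast.symm

theorem nonempty_iso_cycleGraph (hw : w.IsShortestOddLoop) (hspan : ∀ x, x ∈ w.support) :
    Nonempty (G ≃g cycleGraph w.length) := by
  let e : Fin w.length → V := fun i => w.getVert i
  have hinj : Function.Injective e := by
    intro a b hab
    by_contra hne
    rcases lt_or_gt_of_ne (Fin.val_ne_of_ne hne) with h | h
    · exact hw.getVert_ne h b.isLt hab
    · exact hw.getVert_ne h a.isLt hab.symm
  have hsurj : Function.Surjective e := by
    intro x
    obtain ⟨m, rfl, hm⟩ := mem_support_iff_exists_getVert.1 (hspan x)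
    rcases hm.lt_or_eq with hm | rfl
    · exact ⟨⟨m, hm⟩, rfl⟩
    · exact ⟨⟨0, by have := hw.three_le_length; omega⟩, by simp [e]⟩
  have hadj_of_lt : ∀ a b : Fin w.length, a < b → (G.Adj (e a) (e b) ↔ (cycleGraph _).Adj a b) :=
    fun a b h => (hw.adj_getVert_iff h b.isLt).trans (cycleGraph_adj_of_lt h).symm
  refine ⟨(⟨Equiv.ofBijective e ⟨hinj, hsurj⟩, fun {a b} => ?_⟩ : cycleGraph _ ≃g G).symm⟩
  change G.Adj (e a) (e b) ↔ _
  rcases lt_trichotomy a b with h | rfl | h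
  · exact hadj_of_lt a b h
  · simp
  · rw [G.adj_comm, (cycleGraph _).adj_comm]
    exact hadj_of_lt b a h

end SimpleGraph.Walk.IsShortestOddLoop

end

theorem stmt_5_general {V : Type*} (G : SimpleGraph V) :
    StrongCC G 3 ↔ ∃ n : ℕ, Odd n ∧ 3 ≤ n ∧ Nonempty (G ≃g cycGraph n) := by
  simp_rw [cycGraph_eq_cycleGraph]
  constructor
  · intro h
    obtain ⟨v, w, hw⟩ := exists_isShortestOddLoop h.not_colorable
    exact ⟨w.length, hw.1, hw.three_le_length,
      hw.nonempty_iso_cycleGraph (h.mem_support_of_odd_length w hw.1)⟩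
  · rintro ⟨n, hodd, hn, ⟨φ⟩⟩
    exact (strongCC_cycleGraph hodd hn).of_iso_s5 φ

/-- `G` is strong 3-chromatic-choosable iff `G` is an odd cycle. -/
theorem stmt_5 {V : Type*} [Fintype V] (G : SimpleGraph V) :
    StrongCC G 3 ↔ ∃ n : ℕ, Odd n ∧ 3 ≤ n ∧ Nonempty (G ≃g cycGraph n) :=
  stmt_5_general G
end

section
/- Suppose G is a graph with n vertices and m edges and f : V(G) → ℕ is a function with ∑_{v ∈ V(G)} f(v) > m + n. Then there is no list assignment L for G such that |L(v)| = f(v) for each vertex v and G has a unique proper L-coloring. -/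
open SimpleGraph Finset

/-!
Let `P = ∏_{uv ∈ E(G)} (X u - X v)`, of total degree at most `m`, and let `w_v(c)` be the
Lagrange weights `∏_{c' ∈ L v, c' ≠ c} (c - c')⁻¹`. Summing `P(x) ∏_v w_v(x_v)` over the grid
`∏_v L v` extracts the coefficient of `∏_v X_v ^ (|L v| - 1)` in `P` (divided differences kill
every lower power), and this coefficient is zero since `m < ∑_v (|L v| - 1)`. On the other hand
`P(x) ≠ 0` exactly when `x` is a proper coloring, so a unique proper `L`-coloring would leave a
single, nonzero term in the sum.
-/

namespace Lagrange

variable {F ι : Type*} [Field F] [DecidableEq ι]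

theorem sum_pow_mul_nodalWeight_eq_zero {s : Finset ι} {v : ι → F} (hvs : Set.InjOn v s)
    {a : ℕ} (ha : a + 1 < #s) : ∑ i ∈ s, v i ^ a * nodalWeight s v i = 0 := by
  have hcoeff := coeff_eq_sum hvs (P := Polynomial.X ^ a) (by
    rw [Polynomial.degree_X_pow]; exact_mod_cast (by omega : a < #s))
  rw [Polynomial.coeff_X_pow, if_neg (by omega)] at hcoeff
  simpa [nodalWeight, div_eq_mul_inv, prod_inv_distrib] using hcoeff.symm

end Lagrange

namespace MvPolynomial

open Lagrange

variable {σ ι K : Type*} [Fintype σ] [DecidableEq σ] [DecidableEq ι] [Field K]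

theorem sum_piFinset_prod_pow_mul_nodalWeight_eq_zero {S : σ → Finset ι} {v : ι → K}
    (hv : ∀ i, Set.InjOn v (S i)) {a : σ → ℕ} (ha : ∑ i, a i + Fintype.card σ < ∑ i, #(S i)) :
    ∑ x ∈ Fintype.piFinset S, ∏ i, v (x i) ^ a i * nodalWeight (S i) v (x i) = 0 := by
  obtain ⟨i, -, hi⟩ : ∃ i ∈ univ, a i + 1 < #(S i) :=
    exists_lt_of_sum_lt (by simpa [sum_add_distrib] using ha)
  rw [← prod_univ_sum (f := fun i c => v c ^ a i * nodalWeight (S i) v c)]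
  exact prod_eq_zero (mem_univ i) (sum_pow_mul_nodalWeight_eq_zero (hv i) hi)

theorem sum_piFinset_eval_mul_prod_nodalWeight_eq_zero (P : MvPolynomial σ K)
    {S : σ → Finset ι} {v : ι → K} (hv : ∀ i, Set.InjOn v (S i))
    (hdeg : P.totalDegree + Fintype.card σ < ∑ i, #(S i)) :
    ∑ x ∈ Fintype.piFinset S, eval (v ∘ x) P * ∏ i, nodalWeight (S i) v (x i) = 0 := by
  simp_rw [eval_eq', sum_mul, mul_assoc, ← prod_mul_distrib, Function.comp_apply]
  rw [sum_comm]
  refine sum_eq_zero fun a ha => ?_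
  rw [← mul_sum, sum_piFinset_prod_pow_mul_nodalWeight_eq_zero hv, mul_zero]
  have := le_totalDegree ha
  rw [Finsupp.sum_fintype _ _ fun _ => rfl] at this
  omega

end MvPolynomial

open MvPolynomial

namespace SimpleGraph

variable {V : Type*} (G : SimpleGraph V) [Fintype G.edgeSet] (R : Type*) [CommRing R]

/-- Each edge is oriented by an arbitrary representative `Quot.out e`, which only affects the
sign. -/
noncomputable def graphPolynomial : MvPolynomial V R :=
  ∏ e ∈ G.edgeFinset, (X (Quot.out e).1 - X (Quot.out e).2)

theorem totalDegree_graphPolynomial_le : (G.graphPolynomial R).totalDegree ≤ #G.edgeFinset := by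
  have hX (v : V) : (X v : MvPolynomial V R).totalDegree ≤ 1 :=
    (totalDegree_monomial_le (R := R) (Finsupp.single v 1) 1).trans_eq (by simp)
  refine (totalDegree_finsetProd _ _).trans ?_
  refine (sum_le_sum fun e _ => (totalDegree_sub _ _).trans ?_).trans_eq (card_eq_sum_ones _).symm
  exact max_le (hX _) (hX _)

variable {G R}

theorem eval_graphPolynomial_ne_zero_iff [IsDomain R] {x : V → R} :
    eval x (G.graphPolynomial R) ≠ 0 ↔ ∀ u v, G.Adj u v → x u ≠ x v := by
  simp only [graphPolynomial, map_prod, map_sub, eval_X, ne_eq, prod_eq_zero_iff, sub_eq_zero,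
    not_exists, not_and, mem_edgeFinset]
  constructor
  · intro h u v huv hx
    have hout : s((Quot.out s(u, v)).1, (Quot.out s(u, v)).2) = s(u, v) := Quot.out_eq _
    apply h _ (G.mem_edgeSet.2 huv)
    rcases Sym2.eq_iff.1 hout with ⟨h₁, h₂⟩ | ⟨h₁, h₂⟩ <;> simp [h₁, h₂, hx]
  · intro h e he
    have hout : s((Quot.out e).1, (Quot.out e).2) = e := Quot.out_eq e
    rw [← hout] at he
    exact h _ _ he

end SimpleGraph

/-- if `∑ f(v) > m + n` then no list assignment with list sizes `f`
admits a unique proper coloring. -/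
theorem stmt_7 {V : Type*} [Fintype V] (G : SimpleGraph V) [Fintype G.edgeSet]
    (n m : ℕ) (hn : Fintype.card V = n) (hm : G.edgeFinset.card = m)
    (f : V → ℕ) (hf : m + n < ∑ v : V, f v) :
    ¬ ∃ L : V → Finset ℕ, (∀ v, (L v).card = f v) ∧
      ∃! g : V → ℕ, IsProperListColoring G L g := by
  classical
  rintro ⟨L, hL, g, hg, hg_unique⟩
  have hcast : ∀ v, Set.InjOn (Nat.cast : ℕ → ℚ) (L v) := fun _ => Nat.cast_injective.injOn
  have hproper (x : V → ℕ) :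
      eval (Nat.cast ∘ x) (G.graphPolynomial ℚ) ≠ 0 ↔ ∀ u v, G.Adj u v → x u ≠ x v := by
    simp [eval_graphPolynomial_ne_zero_iff]
  have hdeg : (G.graphPolynomial ℚ).totalDegree + Fintype.card V < ∑ v, #(L v) := by
    have := G.totalDegree_graphPolynomial_le ℚ
    simp only [hL]
    omega
  have hsum := (G.graphPolynomial ℚ).sum_piFinset_eval_mul_prod_nodalWeight_eq_zero hcast hdeg
  rw [sum_eq_single_of_mem g (Fintype.mem_piFinset.2 hg.1) fun x hx hxg => ?_] at hsum
  · refine mul_ne_zero ((hproper g).2 hg.2) ?_ hsum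
    exact prod_ne_zero_iff.2 fun v _ => Lagrange.nodalWeight_ne_zero (hcast v) (hg.1 v)
  · have : ¬ IsProperListColoring G L x := fun hx' => hxg (hg_unique x hx')
    rw [not_ne_iff.1 fun h => this ⟨Fintype.mem_piFinset.1 hx, (hproper x).1 h⟩, zero_mul]
end

section
/- Let M be a strong k-chromatic-choosable graph with n vertices and m edges satisfying m ≤ n(k−2), and let H be a graph with a Hamilton path w_1, …, w_t such that each w_i has at most ρ ≥ 1 neighbors among w_1, …, w_{i−1}. Then the list chromatic number of the Cartesian product M □ H is at most k + ρ − 1. -/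
open SimpleGraph Finset

/-
Let `Q = ∏ (x_u - x_v)` be the graph polynomial of `M`, of degree `m ≤ n(k-2)`. If `M` had a
unique colouring from lists of sizes `≥ k-1`, the coefficient formula behind the Combinatorial
Nullstellensatz (a weighted sum of `Q` over the grid of lists, with Lagrange nodal weights) would
make the coefficient of `∏ x_v ^ (|L v| - 1)` nonzero. Comparing degrees then forces all lists to
have exactly `k-1` colours, and the Nullstellensatz on the grid `{0, …, k-2}^V` gives a
`(k-1)`-colouring, contradicting `χ(M) = k`. With strong chromatic-choosability, every
non-constant assignment of lists of sizes `≥ k-1` therefore has two different colourings.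

Colour the copies of `M` along the Hamilton path one after the other, from the lists minus the
colours already used at earlier neighbours; these residual lists have at least `k-1` colours. The
current layer is always coloured from a non-constant residual assignment, and of two different
colourings of it at least one leaves a non-constant residual assignment on the next layer.
-/

namespace Lagrange

variable {F : Type*} [Field F] [DecidableEq F]

theorem sum_pow_mul_nodalWeight {s : Finset F} {j : ℕ} (hj : j < #s) :
    ∑ x ∈ s, x ^ j * nodalWeight s id x = if j = #s - 1 then 1 else 0 := by
  have hdeg : (Polynomial.X ^ j : Polynomial F).degree < #s := by
    rw [Polynomial.degree_X_pow]; exact_mod_cast hj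
  have h := coeff_eq_sum (Set.injOn_id _) hdeg
  simp only [Polynomial.coeff_X_pow, Polynomial.eval_pow, Polynomial.eval_X, id] at h
  simp only [nodalWeight, id, prod_inv_distrib, ← div_eq_mul_inv, ← h, eq_comm]

end Lagrange

theorem Finsupp.exists_lt_of_degree_le_of_ne {σ : Type*} [Fintype σ] {α t : σ →₀ ℕ}
    (hα : α.degree ≤ t.degree) (hne : α ≠ t) : ∃ i, α i < t i := by
  by_contra! h
  rw [Finsupp.degree_eq_sum, Finsupp.degree_eq_sum] at hα
  exact hne (Finsupp.ext fun i =>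
    ((sum_eq_sum_iff_of_le fun i _ => h i).1 (le_antisymm (Finset.sum_le_sum fun i _ => h i) hα)
      i (mem_univ i)).symm)

namespace MvPolynomial

variable {σ F : Type*} [Fintype σ] [DecidableEq σ] [Field F] [DecidableEq F]

theorem sum_piFinset_prod_pow_mul_nodalWeight (S : σ → Finset F) {t : σ →₀ ℕ}
    (hS : ∀ i, #(S i) = t i + 1) {α : σ →₀ ℕ} (hα : α.degree ≤ t.degree) :
    ∑ y ∈ Fintype.piFinset S, ∏ i, y i ^ α i * Lagrange.nodalWeight (S i) id (y i) =
      if α = t then 1 else 0 := by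
  rw [← prod_univ_sum S fun i x => x ^ α i * Lagrange.nodalWeight (S i) id x]
  split_ifs with h
  · subst h
    refine prod_eq_one fun i _ => ?_
    have := hS i
    rw [Lagrange.sum_pow_mul_nodalWeight (by omega), if_pos (by omega)]
  · obtain ⟨i, hi⟩ := Finsupp.exists_lt_of_degree_le_of_ne hα h
    refine prod_eq_zero (mem_univ i) ?_
    have := hS i
    rw [Lagrange.sum_pow_mul_nodalWeight (by omega), if_neg (by omega)]

theorem coeff_eq_sum_piFinset_eval_mul_nodalWeight (P : MvPolynomial σ F) (S : σ → Finset F)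
    {t : σ →₀ ℕ} (hS : ∀ i, #(S i) = t i + 1) (hP : P.totalDegree ≤ t.degree) :
    P.coeff t = ∑ y ∈ Fintype.piFinset S,
      eval y P * ∏ i, Lagrange.nodalWeight (S i) id (y i) := by
  have hα : ∀ α ∈ P.support, α.degree ≤ t.degree := fun α hα => (le_totalDegree hα).trans hP
  simp_rw [eval_eq', sum_mul, mul_assoc, ← prod_mul_distrib]
  rw [sum_comm]
  simp_rw [← mul_sum]
  rw [sum_congr rfl fun α h => by rw [sum_piFinset_prod_pow_mul_nodalWeight S hS (hα α h)]]
  simp only [mul_ite, mul_one, mul_zero, sum_ite_eq', mem_support_iff]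
  split_ifs with h
  · rfl
  · exact not_not.1 h

end MvPolynomial

section GraphPolynomial

variable {V : Type*} [Fintype V]

/-- The linear order only orients the edges; it changes the polynomial by a sign. -/
noncomputable def graphPoly [LinearOrder V] (R : Type*) [CommRing R] (G : SimpleGraph V)
    [DecidableRel G.Adj] : MvPolynomial V R :=
  ∏ p ∈ ({p | G.Adj p.1 p.2 ∧ p.1 < p.2} : Finset (V × V)),
    (MvPolynomial.X p.1 - MvPolynomial.X p.2)

variable [LinearOrder V] {R : Type*} [CommRing R] {G : SimpleGraph V} [DecidableRel G.Adj]

theorem eval_graphPoly_ne_zero_iff [IsDomain R] {y : V → R} :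
    MvPolynomial.eval y (graphPoly R G) ≠ 0 ↔ ∀ u v, G.Adj u v → y u ≠ y v := by
  simp only [graphPoly, map_prod, map_sub, MvPolynomial.eval_X, prod_ne_zero_iff, mem_filter,
    mem_univ, true_and, ne_eq, sub_eq_zero, Prod.forall]
  refine ⟨fun h u v huv => ?_, fun h u v huv => h u v huv.1⟩
  rcases lt_or_gt_of_ne huv.ne with hlt | hlt
  · exact h u v ⟨huv, hlt⟩
  · exact Ne.symm (h v u ⟨huv.symm, hlt⟩)

theorem eval_natCast_graphPoly_ne_zero_iff [IsDomain R] [CharZero R] {g : V → ℕ} :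
    MvPolynomial.eval (fun v => (g v : R)) (graphPoly R G) ≠ 0 ↔
      ∀ u v, G.Adj u v → g u ≠ g v := by
  simp only [eval_graphPoly_ne_zero_iff, ne_eq, Nat.cast_inj]

theorem totalDegree_graphPoly_le [Fintype G.edgeSet] :
    (graphPoly R G).totalDegree ≤ #G.edgeFinset := by
  have hX : ∀ v : V, (MvPolynomial.X v : MvPolynomial V R).totalDegree ≤ 1 := fun v =>
    (MvPolynomial.totalDegree_monomial_le _ _).trans_eq (Finsupp.sum_single_index rfl)
  refine (MvPolynomial.totalDegree_finsetProd _ _).trans ?_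
  refine (sum_le_sum (g := fun _ => 1) fun p _ => (MvPolynomial.totalDegree_sub _ _).trans
    (max_le (hX _) (hX _))).trans ?_
  rw [← card_eq_sum_ones]
  refine card_le_card_of_injOn (fun p => s(p.1, p.2)) (fun p hp => ?_) fun p hp q hq hpq => ?_
  · simpa using (mem_filter.1 hp).2.1
  · simp only [coe_filter, mem_univ, true_and, Set.mem_ofPred_eq] at hp hq
    rcases Sym2.mk_eq_mk_iff.1 hpq with h | h
    · exact h
    · simp only [Prod.swap, Prod.ext_iff] at h
      exact absurd (h.1 ▸ h.2 ▸ hq.2) hp.2.not_gt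

theorem coeff_graphPoly_ne_zero_of_unique [Fintype G.edgeSet] [DecidableEq V] {L : V → Finset ℕ}
    {f : V → ℕ} (hf : IsProperListColoring G L f)
    (huniq : ∀ g, IsProperListColoring G L g → g = f)
    (hE : #G.edgeFinset ≤ ∑ v, (#(L v) - 1)) :
    (graphPoly ℚ G).coeff (Finsupp.equivFunOnFinite.symm fun v => #(L v) - 1) ≠ 0 := by
  set S : V → Finset ℚ := fun v => (L v).image Nat.cast
  have hS : ∀ v, #(S v) = #(L v) - 1 + 1 := fun v => by
    have := card_pos.2 ⟨f v, hf.1 v⟩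
    rw [card_image_of_injective _ Nat.cast_injective]
    omega
  rw [MvPolynomial.coeff_eq_sum_piFinset_eval_mul_nodalWeight _ S hS
    (totalDegree_graphPoly_le.trans (by simpa [Finsupp.degree_eq_sum] using hE)),
    Fintype.piFinset_image, sum_image fun g _ g' _ h => funext fun v =>
      Nat.cast_injective (congrFun h v),
    sum_eq_single_of_mem f (Fintype.mem_piFinset.2 hf.1) fun g hg hgf => ?_]
  · refine mul_ne_zero (eval_natCast_graphPoly_ne_zero_iff.2 hf.2) ?_
    exact prod_ne_zero_iff.2 fun v _ =>
      Lagrange.nodalWeight_ne_zero (Set.injOn_id _) (mem_image_of_mem _ (hf.1 v))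
  · by_contra hne
    exact hgf (huniq g ⟨Fintype.mem_piFinset.1 hg,
      eval_natCast_graphPoly_ne_zero_iff.1 (left_ne_zero_of_mul hne)⟩)

end GraphPolynomial

section UniqueColoring

variable {V : Type*} [Fintype V] {G : SimpleGraph V} [Fintype G.edgeSet]

theorem exists_ne_isProperListColoring {k : ℕ} (hk : 2 ≤ k) (hχ : ¬ G.Colorable (k - 1))
    (hE : #G.edgeFinset ≤ Fintype.card V * (k - 2)) {L : V → Finset ℕ}
    (hL : ∀ v, k - 1 ≤ #(L v)) {f : V → ℕ} (hf : IsProperListColoring G L f) :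
    ∃ g, IsProperListColoring G L g ∧ g ≠ f := by
  classical
  let _ : LinearOrder V := WellOrderingRel.isWellOrder.linearOrder
  by_contra! huniq
  set t : V →₀ ℕ := Finsupp.equivFunOnFinite.symm fun v => #(L v) - 1
  have hkt_le : ∀ v, k - 2 ≤ t v := fun v => by
    simp only [t, Finsupp.coe_equivFunOnFinite_symm]
    have := hL v
    omega
  have hkt : Fintype.card V * (k - 2) ≤ t.degree := by
    rw [Finsupp.degree_eq_sum, ← smul_eq_mul, ← card_univ, ← sum_const]
    exact sum_le_sum fun v _ => hkt_le v
  have hcoeff := coeff_graphPoly_ne_zero_of_unique hf huniq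
    (hE.trans (by simpa [t, Finsupp.degree_eq_sum] using hkt))
  have hdeg : (graphPoly ℚ G).totalDegree = t.degree :=
    le_antisymm (totalDegree_graphPoly_le.trans (hE.trans hkt))
      (MvPolynomial.le_totalDegree (MvPolynomial.mem_support_iff.2 hcoeff))
  -- the degree count is tight, which forces every list to have exactly `k - 1` colours
  have htk : ∀ v, t v = k - 2 := by
    have hsum : ∑ v, t v = ∑ _v : V, (k - 2) := by
      rw [sum_const, card_univ, smul_eq_mul, ← Finsupp.degree_eq_sum]
      exact le_antisymm (hdeg ▸ totalDegree_graphPoly_le.trans hE) hkt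
    exact fun v => ((sum_eq_sum_iff_of_le fun v _ => hkt_le v).1 hsum.symm v (mem_univ v)).symm
  obtain ⟨y, hy, hy0⟩ := MvPolynomial.combinatorial_nullstellensatz_exists_eval_nonzero _ t hcoeff
    hdeg (fun _ => (range (k - 1)).image (Nat.cast : ℕ → ℚ)) fun v => by
      rw [card_image_of_injective _ Nat.cast_injective, card_range, htk]; omega
  simp only [mem_image, mem_range] at hy
  choose g hgk hgy using hy
  have hg : ∀ u v, G.Adj u v → g u ≠ g v := by
    simp_rw [← funext hgy] at hy0
    exact eval_natCast_graphPoly_ne_zero_iff.1 hy0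
  exact hχ ⟨Coloring.mk (fun v => ⟨g v, hgk v⟩) fun huv h => hg _ _ huv (Fin.val_eq_of_eq h)⟩

end UniqueColoring

section ConstantAssignment

variable {V : Type*}

def IsConstantAssignment (L : V → Finset ℕ) (r : ℕ) : Prop :=
  ∃ C : Finset ℕ, #C = r ∧ ∀ v, L v = C

theorem not_isConstantAssignment_of_lt_card [Nonempty V] {L : V → Finset ℕ} {r : ℕ}
    (hL : ∀ v, r < #(L v)) : ¬ IsConstantAssignment L r := by
  rintro ⟨C, hC, hLC⟩
  obtain ⟨v⟩ := ‹Nonempty V›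
  exact (hL v).ne' (by rw [hLC v, hC])

theorem not_isConstantAssignment_erase_or {T : V → Finset ℕ} {k : ℕ} (hk : 1 ≤ k)
    (hT : ∀ u, k ≤ #(T u)) {f g : V → ℕ} (hfg : f ≠ g) (hf : ∃ a b, f a ≠ f b) :
    ¬ IsConstantAssignment (fun u => (T u).erase (f u)) (k - 1) ∨
      ¬ IsConstantAssignment (fun u => (T u).erase (g u)) (k - 1) := by
  by_contra! ⟨⟨Cf, hCf, hTf⟩, ⟨Cg, hCg, hTg⟩⟩
  simp only at hTf hTg
  have hgT : ∀ u, g u ∈ T u := fun u => by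
    by_contra hu
    have := hT u
    rw [← hTg u, erase_eq_of_notMem hu] at hCg
    omega
  by_cases hC : Cf = Cg
  · refine hfg (funext fun u => ?_)
    by_contra hne
    have hgu : g u ∈ (T u).erase (f u) := mem_erase.2 ⟨Ne.symm hne, hgT u⟩
    rw [hTf u, hC, ← hTg u] at hgu
    exact (notMem_erase _ _) hgu
  · obtain ⟨d, hdg, hdf⟩ := not_subset.1 fun h => hC (eq_of_subset_of_card_le h (by omega)).symm
    have hfd : ∀ u, f u = d := fun u => by
      rw [← hTg u] at hdg
      by_contra hne
      exact hdf (hTf u ▸ mem_erase.2 ⟨Ne.symm hne, mem_of_mem_erase hdg⟩)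
    obtain ⟨a, b, hab⟩ := hf
    exact hab ((hfd a).trans (hfd b).symm)

def HasTwoListColorings (M : SimpleGraph V) (r : ℕ) : Prop :=
  ∀ L : V → Finset ℕ, (∀ v, r ≤ #(L v)) → ¬ IsConstantAssignment L r →
    ∃ f g, IsProperListColoring M L f ∧ IsProperListColoring M L g ∧ f ≠ g

end ConstantAssignment

namespace StrongCC

variable {V : Type*} {M : SimpleGraph V} {k : ℕ}

theorem not_colorable_s10 (hM : StrongCC M k) (hk : 1 ≤ k) : ¬ M.Colorable (k - 1) := fun h => by
  have := hM.1 ▸ h.chromaticNumber_le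
  norm_cast at this
  omega

theorem exists_adj (hM : StrongCC M k) (hk : 2 ≤ k) : ∃ u v, M.Adj u v := by
  by_contra! h
  have h1 : M.Colorable 1 :=
    (Coloring.mk (fun _ => (0 : Fin 1)) fun huv => (h _ _ huv).elim).colorable
  exact hM.not_colorable_s10 (by omega) (h1.mono (by omega))

theorem listColorable_of_not_isConstantAssignment [Nontrivial V] (hM : StrongCC M k) (hk : 2 ≤ k)
    {L : V → Finset ℕ} (hL : ∀ v, k - 1 ≤ #(L v)) (hL' : ¬ IsConstantAssignment L (k - 1)) :
    ListColorable M L := by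
  classical
  by_contra hnc
  have hsub : ∀ σ : V → Finset ℕ, (∀ v, σ v ⊆ L v) → (∀ v, #(σ v) = k - 1) →
      ∀ u v, σ u = σ v := fun σ hσL hσ =>
    hM.2 σ hσ fun ⟨f, hf⟩ => hnc ⟨f, fun v => hσL v (hf.1 v), hf.2⟩
  by_cases hall : ∀ v, #(L v) = k - 1
  · obtain ⟨a⟩ := ‹Nontrivial V›.to_nonempty
    exact hL' ⟨L a, hall a, fun v => hsub L (fun _ => subset_rfl) hall v a⟩
  obtain ⟨x, hx⟩ := not_forall.1 hall
  obtain ⟨z, hzx⟩ := exists_ne x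
  choose σ hσL hσ using fun v => exists_subset_card_eq (hL v)
  have hfix : ∀ A ⊆ L x, #A = k - 1 → A = σ z := fun A hAL hA => by
    simpa [hzx] using hsub (Function.update σ x A)
      ((Function.forall_update_iff _ fun v s => s ⊆ L v).2 ⟨hAL, fun v _ => hσL v⟩)
      ((Function.forall_update_iff _ fun _ s => #s = k - 1).2 ⟨hA, fun v _ => hσ v⟩) x z
  obtain ⟨T, hTL, hT⟩ := exists_subset_card_eq (show k ≤ #(L x) by have := hL x; omega)
  obtain ⟨c₁, hc₁, c₂, hc₂, hne⟩ := one_lt_card.1 (show 1 < #T by omega)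
  have h₁ := hfix (T.erase c₁) ((erase_subset _ _).trans hTL) (by rw [card_erase_of_mem hc₁, hT])
  have h₂ := hfix (T.erase c₂) ((erase_subset _ _).trans hTL) (by rw [card_erase_of_mem hc₂, hT])
  have : c₂ ∈ T.erase c₂ := h₂ ▸ h₁ ▸ mem_erase.2 ⟨hne.symm, hc₂⟩
  exact notMem_erase _ _ this

theorem hasTwoListColorings [Fintype V] [Fintype M.edgeSet] (hM : StrongCC M k)
    (hk : 2 ≤ k) (hE : #M.edgeFinset ≤ Fintype.card V * (k - 2)) :
    HasTwoListColorings M (k - 1) := fun L hL hL' => by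
  obtain ⟨u, v, huv⟩ := hM.exists_adj hk
  have : Nontrivial V := ⟨u, v, huv.ne⟩
  obtain ⟨f, hf⟩ := hM.listColorable_of_not_isConstantAssignment hk hL hL'
  obtain ⟨g, hg, hgf⟩ := exists_ne_isProperListColoring hk (hM.not_colorable_s10 (by omega)) hE hL hf
  exact ⟨f, g, hf, hg, hgf.symm⟩

end StrongCC

section Layers

variable {V W : Type*} [Fintype W] [LinearOrder W]

def earlierNeighbors (H : SimpleGraph W) [DecidableRel H.Adj] (i : W) : Finset W :=
  {j | j < i ∧ H.Adj i j}

variable (M : SimpleGraph V) (H : SimpleGraph W) [DecidableRel H.Adj] (L : V × W → Finset ℕ)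

def residualList (c : W → V → ℕ) (i : W) (u : V) : Finset ℕ :=
  L (u, i) \ (earlierNeighbors H i).image (c · u)

variable {M H L} {k ρ : ℕ}

theorem le_card_residualList (c : W → V → ℕ) {i : W} {u : V}
    (hi : #(earlierNeighbors H i) ≤ ρ) (hL : k + ρ - 1 ≤ #(L (u, i))) :
    k - 1 ≤ #(residualList H L c i u) := by
  have := le_card_sdiff ((earlierNeighbors H i).image (c · u)) (L (u, i))
  have := card_image_le (s := earlierNeighbors H i) (f := (c · u))
  unfold residualList
  omega

theorem residualList_congr {c c' : W → V → ℕ} {i : W} (h : ∀ j < i, c j = c' j) :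
    residualList H L c i = residualList H L c' i := by
  funext u
  refine congrArg (L (u, i) \ ·) (image_congr fun j hj => ?_)
  simp only [earlierNeighbors, coe_filter, mem_univ, true_and] at hj
  rw [h j hj.1]

theorem residualList_update_of_le (c : W → V → ℕ) {i j : W} (hji : j ≤ i)
    (h : V → ℕ) : residualList H L (Function.update c i h) j = residualList H L c j :=
  residualList_congr fun _ hj' => Function.update_of_ne (hj'.trans_le hji).ne _ _

theorem residualList_update_of_mem (c : W → V → ℕ) {i j : W}
    (hij : i ∈ earlierNeighbors H j) (h : V → ℕ) (u : V) :
    residualList H L (Function.update c i h) j u =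
      (L (u, j) \ ((earlierNeighbors H j).erase i).image (c · u)).erase (h u) := by
  rw [residualList, ← insert_erase hij, image_insert, Function.update_self, sdiff_insert,
    erase_insert (notMem_erase _ _)]
  congr 2
  exact image_congr fun j' hj' => by rw [Function.update_of_ne (ne_of_mem_erase hj')]

theorem listColorable_boxProd_of_residualList (c : W → V → ℕ)
    (hc : ∀ i, IsProperListColoring M (residualList H L c i) (c i)) :
    ListColorable (M □ H) L := by
  have hne : ∀ {i j : W}, j ∈ earlierNeighbors H i → ∀ u, c j u ≠ c i u := fun hj u h =>
    (mem_sdiff.1 ((hc _).1 u)).2 (mem_image.2 ⟨_, hj, h⟩)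
  refine ⟨fun x => c x.2 x.1, fun x => mem_sdiff.1 ((hc x.2).1 x.1) |>.1, ?_⟩
  rintro ⟨u, i⟩ ⟨v, j⟩ (⟨huv, rfl⟩ | ⟨hij, rfl⟩)
  · exact (hc i).2 u v huv
  · rcases lt_or_gt_of_ne hij.ne with hlt | hlt
    · exact hne (by simpa [earlierNeighbors] using ⟨hlt, hij.symm⟩) u
    · exact (hne (by simpa [earlierNeighbors] using ⟨hlt, hij⟩) u).symm

theorem exists_isProperListColoring_residualList_update (hk : 1 ≤ k)
    (hM : HasTwoListColorings M (k - 1)) (hadj : ∃ a b, M.Adj a b) {c : W → V → ℕ} {i j : W}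
    (hij : i ∈ earlierNeighbors H j) (hj : #(earlierNeighbors H j) ≤ ρ)
    (hLj : ∀ u, k + ρ - 1 ≤ #(L (u, j))) (hi : ∀ u, k - 1 ≤ #(residualList H L c i u))
    (hi' : ¬ IsConstantAssignment (residualList H L c i) (k - 1)) :
    ∃ h, IsProperListColoring M (residualList H L c i) h ∧
      ¬ IsConstantAssignment (residualList H L (Function.update c i h) j) (k - 1) := by
  obtain ⟨f, g, hf, hg, hfg⟩ := hM _ hi hi'
  set T : V → Finset ℕ := fun u => L (u, j) \ ((earlierNeighbors H j).erase i).image (c · u)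
  have hT : ∀ u, k ≤ #(T u) := fun u => by
    simp only [T]
    have := le_card_sdiff (((earlierNeighbors H j).erase i).image (c · u)) (L (u, j))
    have := card_image_le (s := (earlierNeighbors H j).erase i) (f := (c · u))
    have := card_erase_of_mem hij
    have := card_pos.2 ⟨i, hij⟩
    have := hLj u
    omega
  have hupd : ∀ h, residualList H L (Function.update c i h) j = fun u => (T u).erase (h u) :=
    fun h => funext (residualList_update_of_mem c hij h)
  obtain ⟨a, b, hab⟩ := hadj
  rcases not_isConstantAssignment_erase_or hk hT hfg ⟨a, b, hf.2 a b hab⟩ with hf' | hg'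
  · exact ⟨f, hf, hupd f ▸ hf'⟩
  · exact ⟨g, hg, hupd g ▸ hg'⟩

end Layers

section Path

variable {V : Type*} {M : SimpleGraph V} {t k ρ : ℕ} {H : SimpleGraph (Fin t)} [DecidableRel H.Adj]

theorem exists_residualList_layers (hk : 1 ≤ k) (hρ : 1 ≤ ρ)
    (hM : HasTwoListColorings M (k - 1)) (hadj : ∃ a b, M.Adj a b)
    (hham : ∀ i : Fin t, ∀ hi : i.val + 1 < t, H.Adj i ⟨i.val + 1, hi⟩)
    (hback : ∀ i, #(earlierNeighbors H i) ≤ ρ) {L : V × Fin t → Finset ℕ}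
    (hL : ∀ x, k + ρ - 1 ≤ #(L x)) :
    ∀ n ≤ t, ∃ c : Fin t → V → ℕ,
      (∀ j : Fin t, (j : ℕ) < n → IsProperListColoring M (residualList H L c j) (c j)) ∧
      ∀ hn : n < t, ¬ IsConstantAssignment (residualList H L c ⟨n, hn⟩) (k - 1) := by
  have hres : ∀ c i u, k - 1 ≤ #(residualList H L c i u) := fun c i u =>
    le_card_residualList c (hback i) (hL (u, i))
  intro n
  induction n with
  | zero =>
    intro _
    refine ⟨fun _ _ => 0, fun j hj => absurd hj (Nat.not_lt_zero _), fun h0 => ?_⟩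
    obtain ⟨a, -, -⟩ := hadj
    have : Nonempty V := ⟨a⟩
    refine not_isConstantAssignment_of_lt_card fun u => ?_
    have hempty : earlierNeighbors H ⟨0, h0⟩ = ∅ := by
      ext j
      simp [earlierNeighbors, Fin.lt_def]
    have := hL (u, ⟨0, h0⟩)
    simp only [residualList, hempty, image_empty, sdiff_empty]
    omega
  | succ n ih =>
    intro hn
    obtain ⟨c, hc, hnc⟩ := ih (by omega)
    set I : Fin t := ⟨n, by omega⟩
    obtain ⟨h, hh, hnext⟩ : ∃ h, IsProperListColoring M (residualList H L c I) h ∧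
        ∀ hn' : n + 1 < t, ¬ IsConstantAssignment
          (residualList H L (Function.update c I h) ⟨n + 1, hn'⟩) (k - 1) := by
      by_cases hlast : n + 1 < t
      · have hI : I ∈ earlierNeighbors H ⟨n + 1, hlast⟩ := by
          simpa [earlierNeighbors, Fin.lt_def, I] using (hham I hlast).symm
        obtain ⟨h, hh, hJ⟩ := exists_isProperListColoring_residualList_update hk hM hadj hI
          (hback _) (fun u => hL _) (hres c I) (hnc _)
        exact ⟨h, hh, fun _ => hJ⟩
      · obtain ⟨f, -, hf, -⟩ := hM _ (hres c I) (hnc _)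
        exact ⟨f, hf, fun h' => absurd h' hlast⟩
    refine ⟨Function.update c I h, fun j hj => ?_, hnext⟩
    have hjI : j ≤ I := Nat.lt_succ_iff.1 hj
    rw [residualList_update_of_le c hjI h]
    rcases hjI.lt_or_eq with hlt | rfl
    · rw [Function.update_of_ne hlt.ne]
      exact hc j hlt
    · rw [Function.update_self]
      exact hh

theorem choosable_boxProd (hk : 1 ≤ k) (hρ : 1 ≤ ρ) (hM : HasTwoListColorings M (k - 1))
    (hadj : ∃ a b, M.Adj a b) (hham : ∀ i : Fin t, ∀ hi : i.val + 1 < t, H.Adj i ⟨i.val + 1, hi⟩)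
    (hback : ∀ i, #(earlierNeighbors H i) ≤ ρ) : Choosable (M □ H) (k + ρ - 1) := fun L hL => by
  obtain ⟨c, hc, -⟩ := exists_residualList_layers hk hρ hM hadj hham hback hL t le_rfl
  exact listColorable_boxProd_of_residualList c fun j => hc j j.isLt

end Path

theorem stmt_10_general {V : Type*} [Fintype V] (M : SimpleGraph V) [Fintype M.edgeSet]
    (k n m ρ t : ℕ) (hk : 2 ≤ k) (hM : StrongCC M k)
    (hn : Fintype.card V = n) (hm : M.edgeFinset.card = m)
    (hedge : m ≤ n * (k - 2)) (hρ : 1 ≤ ρ)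
    (H : SimpleGraph (Fin t))
    (hham : ∀ i : Fin t, ∀ hi : i.val + 1 < t, H.Adj i ⟨i.val + 1, hi⟩)
    (hback : ∀ i : Fin t, {j : Fin t | j < i ∧ H.Adj i j}.ncard ≤ ρ) :
    listChromaticNumber (M.boxProd H) ≤ k + ρ - 1 := by
  classical
  have hE : #M.edgeFinset ≤ Fintype.card V * (k - 2) := hn ▸ hm ▸ hedge
  refine Nat.sInf_le (choosable_boxProd (by omega) hρ (hM.hasTwoListColorings hk hE)
    (hM.exists_adj hk) hham fun i => ?_)
  simpa [earlierNeighbors, ← Set.ncard_coe_finset] using hback i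

/-- if `M` is strong `k`-chromatic-choosable with `m ≤ n(k-2)` and `H`
has a Hamilton path in which each vertex has at most `ρ` earlier neighbors, then
`χ_ℓ(M □ H) ≤ k + ρ - 1`. -/
theorem stmt_10 {V : Type*} [Fintype V] (M : SimpleGraph V) [Fintype M.edgeSet]
    (k n m ρ t : ℕ) (hk : 2 ≤ k) (hM : StrongCC M k)
    (hn : Fintype.card V = n) (hm : M.edgeFinset.card = m)
    (hedge : m ≤ n * (k - 2)) (hρ : 1 ≤ ρ) (ht : 1 ≤ t)
    (H : SimpleGraph (Fin t))
    (hham : ∀ i : Fin t, ∀ hi : i.val + 1 < t, H.Adj i ⟨i.val + 1, hi⟩)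
    (hback : ∀ i : Fin t, {j : Fin t | j < i ∧ H.Adj i j}.ncard ≤ ρ) :
    listChromaticNumber (M.boxProd H) ≤ k + ρ - 1 :=
  stmt_10_general M k n m ρ t hk hM hn hm hedge hρ H hham hback
end
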